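/- arXiv:1502.07725 — 2 statements merged into one kernel-verified Lean document; each statement's English description precedes it below -/
import Mathlib

section
/- The unique root α > 1 of the branching vector (5/4, 13/4, 2), i.e., the positive real solution of α^{13/4} = α^{2} + α^{5/4} + 1, satisfies α² < 3.188. -/
/-- the root `α > 1` of the branching vector `(5/4, 13/4, 2)`,
i.e. the solution of `α^{13/4} = α² + α^{5/4} + 1`, satisfies `α² < 3.188`. -/
theorem stmt_10 (α : ℝ) (hα : 1 < α)
    (hroot : α ^ ((13 : ℝ) / 4) = α ^ (2 : ℝ) + α ^ ((5 : ℝ) / 4) + 1) :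
    α ^ 2 < 3.188 := by
  have h0 : (0 : ℝ) ≤ α := by linarith
  set t : ℝ := α ^ ((1 : ℝ) / 4) with ht
  have ht1 : 1 < t := by
    rw [ht]
    exact Real.one_lt_rpow_iff_of_pos (by linarith) |>.mpr (Or.inl ⟨hα, by norm_num⟩)
  have key : ∀ n : ℕ, α ^ ((n : ℝ) / 4) = t ^ n := by
    intro n
    rw [ht, ← Real.rpow_natCast (α ^ ((1:ℝ)/4)) n, ← Real.rpow_mul h0]
    ring_nf
  have e13 : α ^ ((13 : ℝ) / 4) = t ^ 13 := key 13
  have e8 : α ^ (2 : ℝ) = t ^ 8 := by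
    have := key 8; norm_num at this ⊢; rw [← this]
  have e5 : α ^ ((5 : ℝ) / 4) = t ^ 5 := key 5
  have hgoal : α ^ 2 = t ^ 8 := by
    rw [← e8, ← Real.rpow_natCast α 2]; norm_num
  rw [hgoal]
  have heq : t ^ 13 = t ^ 8 + t ^ 5 + 1 := by
    rw [← e13, ← e8, ← e5]; exact hroot
  have hfac : (t ^ 8 - 1) * (t ^ 5 - 1) = 2 := by nlinarith [heq]
  by_contra h
  push_neg at h
  have h1 : (3.188 : ℝ) ≤ t ^ 8 := h
  have h5pos : 0 < t ^ 5 - 1 := by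
    have : 1 < t ^ 5 := one_lt_pow₀ ht1 (by norm_num)
    linarith
  have h2 : t ^ 5 ≤ 1047 / 547 := by nlinarith [hfac, h1, h5pos]
  have h5nn : (0 : ℝ) ≤ t ^ 5 := by positivity
  have hA : (t ^ 5) ^ 8 ≤ (1047 / 547 : ℝ) ^ 8 := pow_le_pow_left₀ h5nn h2 8
  have hB : (3.188 : ℝ) ^ 5 ≤ (t ^ 8) ^ 5 := pow_le_pow_left₀ (by norm_num) h1 5
  have hring : (t ^ 8) ^ 5 = (t ^ 5) ^ 8 := by ring
  rw [hring] at hB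
  have : (3.188 : ℝ) ^ 5 ≤ (1047 / 547 : ℝ) ^ 8 := le_trans hB hA
  norm_num at this
end

section
/- If S is a tree and v is a leaf of S adjacent (in an ambient graph G containing S as spanning tree) to some internal vertex w of S other than its S-neighbor, then the tree S' obtained by deleting the edge of S at v and adding the edge vw is a spanning tree of G with exactly the same number of leaves as S, in which the former S-neighbor of v has its degree decreased by one. -/
/-!
Deleting `pv` isolates the leaf `v`, so `S - pv` is acyclic with `v` unreachable from `w`, and adding
`vw` keeps it acyclic. A path of `S` passes through the leaf `v` only at its ends, so every other
vertex still reaches `w` in `S - pv`; hence `S'` is connected. Only `p`, `v`, `w` change their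
neighbourhoods: `v` again has exactly one neighbour, `w` stays internal, and `p` loses `v` but was
not a leaf, since it keeps a neighbour in the connected graph `S'`.
-/

namespace SimpleGraph

variable {V : Type*} {G : SimpleGraph V}

lemma fromEdgeSet_edgeSet_sdiff_union (e : Sym2 V) (u v : V) :
    fromEdgeSet ((G.edgeSet \ {e}) ∪ {s(u, v)}) = G.deleteEdges {e} ⊔ edge u v := by
  rw [fromEdgeSet_union, ← deleteEdges_fromEdgeSet, fromEdgeSet_edgeSet, edge]

lemma Preconnected.reachable_deleteEdges_of_subsingleton_neighborSet (hG : G.Preconnected)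
    {u v x y : V} (hv : (G.neighborSet v).Subsingleton) (hx : x ≠ v) (hy : y ≠ v) :
    (G.deleteEdges {s(u, v)}).Reachable x y := by
  obtain ⟨q, hq⟩ := hG.exists_isPath x y
  have hvq : v ∉ q.support :=
    hq.isTrail.not_mem_support_of_subsingleton_neighborSet hx.symm hy.symm hv
  exact reachable_deleteEdges_iff_exists_walk.mpr
    ⟨q, fun h ↦ hvq (q.snd_mem_support_of_mem_edges h)⟩

section RotateLeaf

variable {S : SimpleGraph V} {p v w : V}

lemma neighborSet_deleteEdges_sup_edge_of_ne {x : V} (hxp : x ≠ p) (hxv : x ≠ v) (hxw : x ≠ w) :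
    (S.deleteEdges {s(p, v)} ⊔ edge v w).neighborSet x = S.neighborSet x := by
  ext y
  simp only [mem_neighborSet, sup_adj, deleteEdges_adj, edge_adj, Set.mem_singleton_iff,
    Sym2.eq_iff]
  grind

lemma neighborSet_deleteEdges_sup_edge_left (hpv : p ≠ v) (hpw : p ≠ w) :
    (S.deleteEdges {s(p, v)} ⊔ edge v w).neighborSet p = S.neighborSet p \ {v} := by
  ext y
  simp only [mem_neighborSet, sup_adj, deleteEdges_adj, edge_adj, Set.mem_singleton_iff,
    Sym2.eq_iff, Set.mem_sdiff]
  grind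

lemma neighborSet_deleteEdges_sup_edge_of_neighborSet_eq (hv : S.neighborSet v = {p})
    (hvw : v ≠ w) : (S.deleteEdges {s(p, v)} ⊔ edge v w).neighborSet v = {w} := by
  ext y
  have hvy := Set.ext_iff.mp hv y
  simp only [mem_neighborSet, Set.mem_singleton_iff] at hvy
  simp only [mem_neighborSet, sup_adj, deleteEdges_adj, edge_adj, Set.mem_singleton_iff,
    Sym2.eq_iff]
  grind

lemma not_reachable_deleteEdges_of_neighborSet_eq (hv : S.neighborSet v = {p}) (hvw : v ≠ w) :
    ¬(S.deleteEdges {s(p, v)}).Reachable v w := by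
  intro h
  obtain ⟨y, hy⟩ := h.nonempty_neighborSet_left hvw
  have hyS : y ∈ S.neighborSet v := (deleteEdges_le _) hy
  rw [hv, Set.mem_singleton_iff] at hyS
  subst hyS
  simp at hy

lemma IsTree.deleteEdges_sup_edge (hS : S.IsTree) (hv : S.neighborSet v = {p}) (hvw : v ≠ w) :
    (S.deleteEdges {s(p, v)} ⊔ edge v w).IsTree := by
  refine ⟨(connected_iff_exists_forall_reachable _).mpr ⟨w, fun x ↦ ?_⟩,
    (hS.isAcyclic.anti (deleteEdges_le _)).sup_edge_of_not_reachable
      (not_reachable_deleteEdges_of_neighborSet_eq hv hvw)⟩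
  obtain rfl | hxv := eq_or_ne x v
  · exact (Adj.reachable (Or.inr ((edge_adj ..).mpr ⟨Or.inl ⟨rfl, rfl⟩, hvw⟩))).symm
  · refine Reachable.mono le_sup_left ?_
    exact hS.connected.preconnected.reachable_deleteEdges_of_subsingleton_neighborSet
      (by simp [hv]) hvw.symm hxv

lemma ncard_neighborSet_deleteEdges_sup_edge_left_add_one [Finite V] (hvp : S.Adj v p)
    (hwp : w ≠ p) :
    ((S.deleteEdges {s(p, v)} ⊔ edge v w).neighborSet p).ncard + 1 = (S.neighborSet p).ncard := by
  rw [neighborSet_deleteEdges_sup_edge_left hvp.ne.symm hwp.symm]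
  exact Set.ncard_sdiff_singleton_add_one hvp.symm (Set.toFinite _)

lemma IsTree.ncard_neighborSet_deleteEdges_sup_edge_eq_one [Finite V] (hS : S.IsTree)
    (hv : S.neighborSet v = {p}) (hwp : w ≠ p) (hvw : v ≠ w) (hw : 2 ≤ (S.neighborSet w).ncard)
    {x : V} (hx : (S.neighborSet x).ncard = 1) :
    ((S.deleteEdges {s(p, v)} ⊔ edge v w).neighborSet x).ncard = 1 := by
  have hvp : S.Adj v p := by simp [← mem_neighborSet, hv]
  obtain rfl | hxp := eq_or_ne x p
  · have : Nontrivial V := ⟨⟨v, x, hvp.ne⟩⟩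
    obtain ⟨y, hy⟩ :=
      (hS.deleteEdges_sup_edge hv hvw).connected.preconnected.exists_adj_of_nontrivial x
    have hpos : 0 < ((S.deleteEdges {s(x, v)} ⊔ edge v w).neighborSet x).ncard :=
      (Set.ncard_pos (Set.toFinite _)).mpr ⟨y, hy⟩
    have := ncard_neighborSet_deleteEdges_sup_edge_left_add_one (w := w) hvp hwp
    omega
  obtain rfl | hxv := eq_or_ne x v
  · rw [neighborSet_deleteEdges_sup_edge_of_neighborSet_eq hv hvw, Set.ncard_singleton]
  obtain rfl | hxw := eq_or_ne x w
  · omega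
  rwa [neighborSet_deleteEdges_sup_edge_of_ne hxp hxv hxw]

end RotateLeaf

end SimpleGraph

/-- rotating a leaf. If `v` is a leaf of the spanning tree `S`
with unique `S`-neighbor `p`, and `w ≠ p` is an internal vertex of `S` with
`vw ∈ E(G)`, then `S' = (S - pv) + vw` is a spanning tree of `G`, the degree
of `p` drops by one, and `S'` has at least as many leaves as `S`. -/
theorem stmt_17 {V : Type*} [Fintype V] (G S : SimpleGraph V)
    (hSG : S ≤ G) (hS : S.IsTree)
    (v p w : V) (hvp : S.Adj v p) (hvleaf : S.neighborSet v = {p})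
    (hwp : w ≠ p) (hwint : 2 ≤ (S.neighborSet w).ncard) (hvw : G.Adj v w) :
    SimpleGraph.fromEdgeSet ((S.edgeSet \ {s(p, v)}) ∪ {s(v, w)}) ≤ G ∧
    (SimpleGraph.fromEdgeSet ((S.edgeSet \ {s(p, v)}) ∪ {s(v, w)})).IsTree ∧
    ((SimpleGraph.fromEdgeSet ((S.edgeSet \ {s(p, v)}) ∪ {s(v, w)})).neighborSet p).ncard + 1 =
      (S.neighborSet p).ncard ∧
    {x : V | (S.neighborSet x).ncard = 1}.ncard ≤
      {x : V | ((SimpleGraph.fromEdgeSet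
        ((S.edgeSet \ {s(p, v)}) ∪ {s(v, w)})).neighborSet x).ncard = 1}.ncard := by
  rw [SimpleGraph.fromEdgeSet_edgeSet_sdiff_union]
  refine ⟨sup_le ((S.deleteEdges_le _).trans hSG) (G.edge_le_iff.mpr (Or.inr hvw)),
    hS.deleteEdges_sup_edge hvleaf hvw.ne,
    SimpleGraph.ncard_neighborSet_deleteEdges_sup_edge_left_add_one hvp hwp,
    Set.ncard_le_ncard (fun _ ↦ hS.ncard_neighborSet_deleteEdges_sup_edge_eq_one hvleaf hwp
      hvw.ne hwint) (Set.toFinite _)⟩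
end
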